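/- arXiv:2201.07256 — 3 statements merged into one kernel-verified Lean document; each statement's English description precedes it below -/
import Mathlib

section
/- If the row space of F is contained in the row space of the observability matrix 𝒪 of (A,C), then for every eigenvalue λ of A (indeed every λ ∈ ℂ), rank[A − λI; C; F] = rank[A − λI; C]. -/
open Matrix

/-- The observability matrix `[C; CA; ...; CA^{n-1}]`. -/
noncomputable def obsMat {n q : ℕ} (A : Matrix (Fin n) (Fin n) ℂ)
    (C : Matrix (Fin q) (Fin n) ℂ) : Matrix (Fin n × Fin q) (Fin n) ℂ :=
  fun p k => (C * A ^ (p.1 : ℕ)) p.2 k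

/-!
The row space `S` of `[A - λI; C]` is `A`-invariant, because `v A = v (A - λI) + λ v`. Since it
contains the rows of `C`, it contains the rows of every `C Aᵏ`, hence the row space of `𝒪` and
with it the rows of `F`; so appending `F` leaves the row space, and thus the rank, unchanged.
-/

open Submodule Set

section RowSpace

variable {R : Type*} [Semiring R] {m m' n : Type*}

theorem span_range_fromRows (X : Matrix m n R) (Y : Matrix m' n R) :
    span R (range (fromRows X Y)) = span R (range X) ⊔ span R (range Y) := by
  rw [← span_union]
  exact congrArg (span R) (Sum.elim_range X Y)

theorem vecMul_mem_span_range [Fintype m] (M : Matrix m n R) (v : m → R) :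
    v ᵥ* M ∈ span R (range M) :=
  range_vecMulLinear M ▸ LinearMap.mem_range_self M.vecMulLinear v

theorem vecMul_pow_mem [Fintype n] [DecidableEq n] {A : Matrix n n R} {S : Submodule R (n → R)}
    (hS : ∀ v ∈ S, v ᵥ* A ∈ S) {v : n → R} (hv : v ∈ S) (k : ℕ) :
    v ᵥ* A ^ k ∈ S := by
  induction k with
  | zero => simpa using hv
  | succ k ih => simpa only [pow_succ, vecMul_vecMul] using hS _ ih

end RowSpace

theorem vecMul_mem_of_span_range_sub_smul_one_le {R n : Type*} [CommRing R] [Fintype n]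
    [DecidableEq n] {A : Matrix n n R} {c : R} {S : Submodule R (n → R)}
    (hS : span R (range (A - c • (1 : Matrix n n R))) ≤ S) {v : n → R} (hv : v ∈ S) :
    v ᵥ* A ∈ S := by
  have hA : v ᵥ* A = v ᵥ* (A - c • 1) + c • v := by
    rw [vecMul_sub, vecMul_smul, vecMul_one, sub_add_cancel]
  rw [hA]
  exact add_mem (hS (vecMul_mem_span_range _ v)) (smul_mem S c hv)

theorem rank_fromRows_eq_of_span_range_le {R m m' n : Type*} [Field R] [Finite m]
    [Finite m'] [Fintype n] (M : Matrix m n R) {N : Matrix m' n R}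
    (hN : span R (range N) ≤ span R (range M)) :
    (fromRows M N).rank = M.rank := by
  rw [rank_eq_finrank_span_row, rank_eq_finrank_span_row]
  change Module.finrank R (span R (range (fromRows M N))) = Module.finrank R (span R (range M))
  rw [span_range_fromRows, sup_eq_left.mpr hN]

theorem span_range_obsMat_le {n q : ℕ} {A : Matrix (Fin n) (Fin n) ℂ}
    {C : Matrix (Fin q) (Fin n) ℂ} {S : Submodule ℂ (Fin n → ℂ)}
    (hS : ∀ v ∈ S, v ᵥ* A ∈ S) (hC : span ℂ (range C) ≤ S) :
    span ℂ (range (obsMat A C)) ≤ S := by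
  rw [span_le]
  rintro _ ⟨⟨k, i⟩, rfl⟩
  exact vecMul_pow_mem hS (hC (subset_span ⟨i, rfl⟩)) k

theorem pbh_of_rowSpace_le {n q r : ℕ}
    (A : Matrix (Fin n) (Fin n) ℂ) (C : Matrix (Fin q) (Fin n) ℂ)
    (F : Matrix (Fin r) (Fin n) ℂ)
    (h : Submodule.span ℂ (Set.range F) ≤ Submodule.span ℂ (Set.range (obsMat A C))) :
    ∀ lam : ℂ,
      (fromRows (fromRows (A - lam • (1 : Matrix (Fin n) (Fin n) ℂ)) C) F).rank =
        (fromRows (A - lam • (1 : Matrix (Fin n) (Fin n) ℂ)) C).rank := by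
  intro lam
  set S := span ℂ (range (fromRows (A - lam • (1 : Matrix (Fin n) (Fin n) ℂ)) C))
  have hBS : span ℂ (range (A - lam • (1 : Matrix (Fin n) (Fin n) ℂ))) ≤ S :=
    le_sup_left.trans_eq (span_range_fromRows _ C).symm
  have hCS : span ℂ (range C) ≤ S := le_sup_right.trans_eq (span_range_fromRows _ C).symm
  have hA : ∀ v ∈ S, v ᵥ* A ∈ S := fun _ => vecMul_mem_of_span_range_sub_smul_one_le hBS
  exact rank_fromRows_eq_of_span_range_le _ (h.trans (span_range_obsMat_le hA hCS))
end

section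
/- Suppose, after a permutation of coordinates, A = [[A₁₁, 0],[A₂₁, A₂₂]] with A₂₂ ∈ ℝ^{(n−k)×(n−k)} diagonalizable, C = [C₁, 0], and F = [F₁, F₂]. If rank[A − λI; C; F] = rank[A − λI; C] for all λ ∈ ℂ, then F₂ = 0. -/
/-!
For an eigenvector `v` of `A₂₂` with eigenvalue `λ`, the vector `(0, v)` lies in the kernel of
`[A - λI; C]` because `A` is block lower triangular and `C = [C₁, 0]`. Equal ranks force
equal kernels, so `(0, v)` is also killed by `F`, i.e. `F₂ v = 0`. Since `A₂₂` is diagonalizable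
its eigenvectors span, hence `F₂ = 0`.
-/

open Matrix

namespace Matrix

theorem ker_mulVecLin_fromRows {R m₁ m₂ n : Type*} [CommSemiring R] [Fintype n]
    (B : Matrix m₁ n R) (F : Matrix m₂ n R) :
    LinearMap.ker (fromRows B F).mulVecLin =
      LinearMap.ker B.mulVecLin ⊓ LinearMap.ker F.mulVecLin := by
  ext v
  simp [fromRows_mulVec, ← Sum.elim_zero_zero, Sum.elim_eq_iff]

theorem mulVec_eq_zero_of_rank_fromRows_eq {K m₁ m₂ n : Type*} [Field K] [Fintype n]
    {B : Matrix m₁ n K} {F : Matrix m₂ n K} (hrank : (fromRows B F).rank = B.rank)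
    {v : n → K} (hv : B *ᵥ v = 0) : F *ᵥ v = 0 := by
  have hfinrank : Module.finrank K (LinearMap.ker (fromRows B F).mulVecLin) =
      Module.finrank K (LinearMap.ker B.mulVecLin) := by
    have h₁ := LinearMap.finrank_range_add_finrank_ker (fromRows B F).mulVecLin
    have h₂ := LinearMap.finrank_range_add_finrank_ker B.mulVecLin
    rw [rank, rank] at hrank
    omega
  have hker := Submodule.eq_of_le_of_finrank_eq
    ((ker_mulVecLin_fromRows B F).trans_le inf_le_left) hfinrank
  rw [ker_mulVecLin_fromRows, inf_eq_left] at hker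
  exact hker hv

theorem fromBlocks_zero₁₂_mulVec_inr {k m R : Type*} [Fintype k] [Fintype m]
    [NonUnitalNonAssocSemiring R] (A₁₁ : Matrix k k R) (A₂₁ : Matrix m k R)
    (A₂₂ : Matrix m m R) (v : m → R) :
    fromBlocks A₁₁ 0 A₂₁ A₂₂ *ᵥ Sum.elim (0 : k → R) v = Sum.elim (0 : k → R) (A₂₂ *ᵥ v) := by
  simp [fromBlocks_mulVec]

theorem mulVec_col_eq_of_mul_eq_mul_diagonal {n R : Type*} [Fintype n] [DecidableEq n]
    [CommSemiring R] {A P : Matrix n n R} {d : n → R} (h : A * P = P * diagonal d) (j : n) :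
    A *ᵥ (fun i => P i j) = d j • fun i => P i j := by
  ext i
  have := congrFun (congrFun h i) j
  rw [mul_diagonal, mul_apply'] at this
  simp [mulVec, this, mul_comm]

theorem eq_zero_of_mulVec_eigenvector_eq_zero {K n l : Type*} [Field K] [Fintype n]
    [DecidableEq n] {A P D : Matrix n n K} (hP : IsUnit P.det) (hD : D.IsDiag)
    (hA : A = P * D * P⁻¹) {F : Matrix l n K}
    (hF : ∀ (μ : K) (v : n → K), A *ᵥ v = μ • v → F *ᵥ v = 0) : F = 0 := by
  have hAP : A * P = P * diagonal D.diag := by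
    rw [(isDiag_iff_diagonal_diag D).mp hD, hA, Matrix.mul_assoc, nonsing_inv_mul P hP,
      Matrix.mul_one]
  have hFP : F * P = 0 := by
    ext i j
    rw [mul_apply']
    exact congrFun (hF _ _ (mulVec_col_eq_of_mul_eq_mul_diagonal hAP j)) i
  calc F = F * P * P⁻¹ := by rw [Matrix.mul_assoc, mul_nonsing_inv P hP, Matrix.mul_one]
    _ = 0 := by rw [hFP, Matrix.zero_mul]

end Matrix

theorem F2_eq_zero_of_pbh_functional {k m q r : ℕ}
    (A11 : Matrix (Fin k) (Fin k) ℂ) (A21 : Matrix (Fin m) (Fin k) ℂ)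
    (A22 : Matrix (Fin m) (Fin m) ℂ)
    (C1 : Matrix (Fin q) (Fin k) ℂ)
    (F1 : Matrix (Fin r) (Fin k) ℂ) (F2 : Matrix (Fin r) (Fin m) ℂ)
    -- `A₂₂` is diagonalizable
    (hdiag : ∃ P D : Matrix (Fin m) (Fin m) ℂ,
      IsUnit P.det ∧ D.IsDiag ∧ A22 = P * D * P⁻¹)
    -- the PBH-type rank condition holds for all `λ`
    (hpbh : ∀ lam : ℂ,
      (fromRows
        (fromRows
          (fromBlocks A11 0 A21 A22 - lam • (1 : Matrix (Fin k ⊕ Fin m) (Fin k ⊕ Fin m) ℂ))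
          (fromCols C1 0))
        (fromCols F1 F2)).rank =
      (fromRows
        (fromBlocks A11 0 A21 A22 - lam • (1 : Matrix (Fin k ⊕ Fin m) (Fin k ⊕ Fin m) ℂ))
        (fromCols C1 0)).rank) :
    F2 = 0 := by
  obtain ⟨P, D, hP, hD, hA⟩ := hdiag
  refine eq_zero_of_mulVec_eigenvector_eq_zero hP hD hA fun lam v hv => ?_
  have hnull := mulVec_eq_zero_of_rank_fromRows_eq (hpbh lam) (v := Sum.elim 0 v) (by
    ext ((i | i) | i) <;>
      simp [fromRows_mulVec, sub_mulVec, smul_mulVec, fromBlocks_zero₁₂_mulVec_inr, hv])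
  simpa [fromCols_mulVec_sumElim] using hnull
end

section
/- Let 𝒟 be the union of all minimal dilation sets of [A; C], partition coordinates as 𝒳₁ = complement of 𝒟 (size k) and 𝒳₂ = 𝒟. Then the submatrix of [A; C] on columns 𝒳₁ has structural rank k; consequently, if every nonzero column of F lies in 𝒳₁ (i.e., targets avoid 𝒟), then generically rank[A; C; F] = rank[A; C]. -/
open Matrix

open scoped Classical

/-- `M` is a numerical realization respecting the zero pattern `P`. -/
def Respects {α : Type*} {n : ℕ} (P : Finset (α × Fin n)) (M : Matrix α (Fin n) ℝ) : Prop :=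
  ∀ i j, M i j ≠ 0 → (i, j) ∈ P

/-- The structural (generic) rank of a zero pattern. -/
noncomputable def structRank {α : Type*} [Fintype α] {n : ℕ}
    (P : Finset (α × Fin n)) : ℕ :=
  sSup {k | ∃ M : Matrix α (Fin n) ℝ, Respects P M ∧ M.rank = k}

/-- The pattern restricted to the columns indexed by `S`. -/
def colRestrict {α : Type*} {n : ℕ} (P : Finset (α × Fin n)) (S : Finset (Fin n)) :
    Finset (α × Fin n) :=
  P.filter (fun p => p.2 ∈ S)

/-- `S` is a dilation set: the columns of `S` have nonzero entries in fewer than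
`|S|` rows. -/
def IsDilation {α : Type*} [Fintype α] {n : ℕ}
    (P : Finset (α × Fin n)) (S : Finset (Fin n)) : Prop :=
  (Finset.univ.filter (fun i : α => ∃ j ∈ S, (i, j) ∈ P)).card < S.card

/-- `S` is a minimal dilation set: `S` is a dilation and no proper subset of `S`
is a dilation. -/
def IsMinimalDilation {α : Type*} [Fintype α] {n : ℕ}
    (P : Finset (α × Fin n)) (S : Finset (Fin n)) : Prop :=
  IsDilation P S ∧ ∀ S' : Finset (Fin n), S' ⊂ S → ¬ IsDilation P S'

/-!
The columns outside `D` contain no dilation, since every dilation contains a minimal one; so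
Hall's condition holds on them. A realization of rank `ρ = structRank P` shows by a rank count
that every column set has at most `n - ρ` more columns than neighbouring rows. After adding
`n - ρ` dummy rows joined to every column of `D`, Hall's theorem therefore gives a matching of
size at least `ρ` covering every column outside `D`. Its 0/1 matrix realizes `P` with rank `ρ`,
its restriction to the columns outside `D` proves the first claim, and its rows include the unit
vector `e_j` for each `j ∉ D`, of which every row of `F` is a multiple.
-/

open Finset Submodule Module

namespace Matrix

variable {m n : Type*} [Fintype n]

theorem rank_add_le (A B : Matrix m n ℝ) : (A + B).rank ≤ A.rank + B.rank := by
  unfold rank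
  rw [mulVecLin_add]
  exact (finrank_mono (LinearMap.range_add_le _ _)).trans
    (finrank_add_le_finrank_add_finrank _ _)

theorem rank_diagonal_indicator [DecidableEq n] (s : Finset n) :
    (diagonal ((s : Set n).indicator (1 : n → ℝ))).rank = #s := by
  rw [rank_diagonal, Fintype.card_subtype]
  simp [Set.indicator_apply]

theorem rank_fromRows_of_mem_span [Fintype m] {r : Type*} [Fintype r] (M : Matrix m n ℝ)
    (F : Matrix r n ℝ) (hF : ∀ l, F l ∈ span ℝ (Set.range M)) :
    (fromRows M F).rank = M.rank := by
  rw [rank_eq_finrank_span_row, rank_eq_finrank_span_row, row, row,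
    show Set.range (fromRows M F) = Set.range M ∪ Set.range F from Set.Sum.elim_range _ _,
    span_union, sup_eq_left.mpr (span_le.mpr (Set.range_subset_iff.mpr hF))]

end Matrix

section Neighbors

variable {α : Type*} [Fintype α] {n : ℕ}

noncomputable def neighbors (P : Finset (α × Fin n)) (S : Finset (Fin n)) : Finset α :=
  univ.filter fun i => ∃ j ∈ S, (i, j) ∈ P

theorem isDilation_iff {P : Finset (α × Fin n)} {S : Finset (Fin n)} :
    IsDilation P S ↔ #(neighbors P S) < #S := Iff.rfl

theorem rank_le_card_neighbors_add_card_compl {P : Finset (α × Fin n)} {M : Matrix α (Fin n) ℝ}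
    (hM : Respects P M) (S : Finset (Fin n)) : M.rank ≤ #(neighbors P S) + #Sᶜ := by
  set dS := diagonal ((S : Set (Fin n)).indicator (1 : Fin n → ℝ))
  set dSc := diagonal (((Sᶜ : Finset (Fin n)) : Set (Fin n)).indicator (1 : Fin n → ℝ))
  set dN := diagonal ((neighbors P S : Set α).indicator (1 : α → ℝ))
  have hsplit : M = M * dS + M * dSc := by
    ext i j
    by_cases hj : j ∈ S <;> simp [dS, dSc, hj]
  have hrows : M * dS = dN * (M * dS) := by
    ext i j
    by_cases hi : i ∈ neighbors P S
    · simp [dN, hi]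
    · have : j ∈ S → M i j = 0 := fun hj => by
        by_contra h
        exact hi (by simpa [neighbors] using ⟨j, hj, hM i j h⟩)
      by_cases hj : j ∈ S <;> simp [dS, dN, hi, hj, this]
  calc M.rank = (M * dS + M * dSc).rank := congrArg rank hsplit
    _ ≤ (M * dS).rank + (M * dSc).rank := rank_add_le _ _
    _ ≤ dN.rank + dSc.rank := by
        rw [hrows]
        exact add_le_add (rank_mul_le_left _ _) (rank_mul_le_right _ _)
    _ = #(neighbors P S) + #Sᶜ := by rw [rank_diagonal_indicator, rank_diagonal_indicator]

end Neighbors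

section Matching

variable {α : Type*} {n : ℕ}

def IsMatching (E : Finset (α × Fin n)) : Prop :=
  Set.InjOn Prod.fst (E : Set (α × Fin n)) ∧ Set.InjOn Prod.snd (E : Set (α × Fin n))

noncomputable def matchingMatrix (E : Finset (α × Fin n)) : Matrix α (Fin n) ℝ :=
  of fun i j => if (i, j) ∈ E then 1 else 0

theorem respects_matchingMatrix {P E : Finset (α × Fin n)} (h : E ⊆ P) :
    Respects P (matchingMatrix E) := fun i j hij =>
  h (by by_contra hE; simp [matchingMatrix, hE] at hij)

theorem matchingMatrix_row_eq_single {E : Finset (α × Fin n)} (hE : IsMatching E) {i : α}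
    {j : Fin n} (hij : (i, j) ∈ E) : matchingMatrix E i = Pi.single j 1 := by
  ext j'
  by_cases hj : j' = j
  · simp [matchingMatrix, hj, hij]
  · have : (i, j') ∉ E := fun h => hj (congrArg Prod.snd (hE.1 h hij rfl))
    simp [matchingMatrix, hj, this]

theorem rank_matchingMatrix {E : Finset (α × Fin n)} (hE : IsMatching E) :
    (matchingMatrix E).rank = #E := by
  apply le_antisymm
  · have hcols : matchingMatrix E = matchingMatrix E *
        diagonal ((E.image Prod.snd : Set (Fin n)).indicator (1 : Fin n → ℝ)) := by
      ext i j
      by_cases hij : (i, j) ∈ E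
      · simp [matchingMatrix, mul_diagonal, hij, Set.indicator_apply]
        exact ⟨i, hij⟩
      · simp [matchingMatrix, mul_diagonal, hij]
    calc (matchingMatrix E).rank ≤ #(E.image Prod.snd) := by
          rw [hcols, ← rank_diagonal_indicator]
          exact rank_mul_le_right _ _
      _ = #E := card_image_of_injOn hE.2
  · have hsub : (matchingMatrix E).submatrix (fun e : E => e.1.1) (fun e : E => e.1.2) = 1 := by
      ext e e'
      by_cases h : e = e'
      · subst h
        simp [matchingMatrix]
      · have : (e.1.1, e'.1.2) ∉ E := fun hmem => by
          have h1 : (e.1.1, e'.1.2) = e.1 := hE.1 hmem e.2 rfl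
          exact h (Subtype.ext (hE.2 e.2 e'.2 (congrArg Prod.snd h1).symm))
        simp [matchingMatrix, h, this]
    calc #E = (1 : Matrix E E ℝ).rank := by rw [rank_one, Fintype.card_coe]
      _ ≤ (matchingMatrix E).rank := hsub ▸ rank_submatrix_le _ _ _

theorem single_mem_span_matchingMatrix {E : Finset (α × Fin n)} (hE : IsMatching E) {j : Fin n}
    (hj : j ∈ E.image Prod.snd) :
    Pi.single j 1 ∈ span ℝ (Set.range (matchingMatrix E)) := by
  obtain ⟨⟨i, j⟩, hij, rfl⟩ := mem_image.mp hj
  exact subset_span ⟨i, matchingMatrix_row_eq_single hE hij⟩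

end Matching

section Hall

variable {α : Type*} [Fintype α] {n : ℕ}

-- the rows `Sum.inr _` are `d` dummy rows, adjacent to exactly the columns outside `X`
theorem exists_injective_sum_of_card_le_card_neighbors {P : Finset (α × Fin n)}
    {X : Finset (Fin n)} {d : ℕ} (hX : ∀ S ⊆ X, #S ≤ #(neighbors P S))
    (hd : ∀ S, #S ≤ #(neighbors P S) + d) :
    ∃ f : Fin n → α ⊕ Fin d, Function.Injective f ∧
      ∀ j, Sum.elim (fun a => (a, j) ∈ P) (fun _ => j ∉ X) (f j) := by
  let t : Fin n → Finset (α ⊕ Fin d) := fun j =>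
    univ.filter fun i => Sum.elim (fun a => (a, j) ∈ P) (fun _ => j ∉ X) i
  have hall : ∀ s : Finset (Fin n), #s ≤ #(s.biUnion t) := by
    intro s
    by_cases hs : s ⊆ X
    · calc #s ≤ #(neighbors P s) := hX s hs
        _ = #((neighbors P s).disjSum (∅ : Finset (Fin d))) := by simp
        _ ≤ #(s.biUnion t) := card_le_card fun i hi => by
          rcases i with a | b <;> simp_all [neighbors, t]
    · obtain ⟨j, hjs, hjX⟩ := not_subset.mp hs
      calc #s ≤ #(neighbors P s) + d := hd s
        _ = #((neighbors P s).disjSum (univ : Finset (Fin d))) := by simp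
        _ ≤ #(s.biUnion t) := card_le_card fun i hi => by
          rcases i with a | b
          · simp_all [neighbors, t]
          · simpa [t] using ⟨j, hjs, hjX⟩
  obtain ⟨f, hf, hft⟩ := (all_card_le_biUnion_card_iff_exists_injective t).mp hall
  exact ⟨f, hf, fun j => by simpa [t] using hft j⟩

theorem exists_matching_of_card_le_card_neighbors {P : Finset (α × Fin n)} {X : Finset (Fin n)}
    {d : ℕ} (hX : ∀ S ⊆ X, #S ≤ #(neighbors P S))
    (hd : ∀ S, #S ≤ #(neighbors P S) + d) :
    ∃ E ⊆ P, IsMatching E ∧ X ⊆ E.image Prod.snd ∧ n ≤ #E + d := by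
  obtain ⟨f, hf, hadj⟩ := exists_injective_sum_of_card_le_card_neighbors hX hd
  set E := univ.filter fun p : α × Fin n => f p.2 = .inl p.1
  have hmem : ∀ {p}, p ∈ E ↔ f p.2 = .inl p.1 := by simp [E]
  refine ⟨E, fun p hp => by simpa [hmem.mp hp] using hadj p.2, ⟨?_, ?_⟩, ?_, ?_⟩
  · intro p hp q hq h
    have h2 : p.2 = q.2 := hf (by rw [hmem.mp hp, hmem.mp hq, h])
    exact Prod.ext h h2
  · intro p hp q hq h
    have h1 : Sum.inl p.1 = (Sum.inl q.1 : α ⊕ Fin d) := by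
      rw [← hmem.mp hp, ← hmem.mp hq, h]
    exact Prod.ext (Sum.inl_injective h1) h
  · intro j hj
    rcases hfj : f j with a | b
    · exact mem_image.mpr ⟨(a, j), hmem.mpr hfj, rfl⟩
    · simpa [hfj, hj] using hadj j
  · calc n = #(univ.image f) := by
          rw [card_image_of_injective _ hf, card_univ, Fintype.card_fin]
      _ ≤ #((E.image Prod.fst).disjSum (univ : Finset (Fin d))) := card_le_card fun i hi => by
          obtain ⟨j, -, rfl⟩ := mem_image.mp hi
          rcases hfj : f j with a | b
          · simpa using ⟨j, hmem.mpr hfj⟩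
          · simp
      _ ≤ #E + d := by
          rw [card_disjSum, card_univ, Fintype.card_fin]
          exact add_le_add_left card_image_le d

end Hall

section StructRank

theorem bddAbove_ranks_of_respects {α : Type*} {n : ℕ} (P : Finset (α × Fin n)) :
    BddAbove {k | ∃ M : Matrix α (Fin n) ℝ, Respects P M ∧ M.rank = k} :=
  ⟨n, by rintro k ⟨M, -, rfl⟩; simpa using M.rank_le_card_width⟩

variable {α : Type*} [Fintype α] {n : ℕ}

theorem rank_le_structRank {P : Finset (α × Fin n)} {M : Matrix α (Fin n) ℝ}
    (hM : Respects P M) : M.rank ≤ structRank P :=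
  le_csSup (bddAbove_ranks_of_respects P) ⟨M, hM, rfl⟩

theorem exists_rank_eq_structRank (P : Finset (α × Fin n)) :
    ∃ M : Matrix α (Fin n) ℝ, Respects P M ∧ M.rank = structRank P :=
  Nat.sSup_mem (s := {k | ∃ M : Matrix α (Fin n) ℝ, Respects P M ∧ M.rank = k})
    ⟨0, 0, fun _ _ h => absurd rfl h, rank_zero⟩ (bddAbove_ranks_of_respects P)

theorem structRank_le (P : Finset (α × Fin n)) : structRank P ≤ n := by
  obtain ⟨M, -, hM⟩ := exists_rank_eq_structRank P
  simpa [hM] using M.rank_le_card_width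

theorem card_add_structRank_le (P : Finset (α × Fin n)) (S : Finset (Fin n)) :
    #S + structRank P ≤ #(neighbors P S) + n := by
  obtain ⟨M, hM, hrank⟩ := exists_rank_eq_structRank P
  have hbound := rank_le_card_neighbors_add_card_compl hM S
  have hS := card_le_univ S
  rw [card_compl, Fintype.card_fin] at hbound
  rw [Fintype.card_fin] at hS
  omega

theorem structRank_colRestrict_le (P : Finset (α × Fin n)) (S : Finset (Fin n)) :
    structRank (colRestrict P S) ≤ #S := by
  obtain ⟨M, hM, hrank⟩ := exists_rank_eq_structRank (colRestrict P S)
  have hN : neighbors (colRestrict P S) Sᶜ = ∅ := by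
    ext i
    simp +contextual [neighbors, colRestrict]
  simpa [hrank, hN] using rank_le_card_neighbors_add_card_compl hM Sᶜ

theorem card_le_structRank_colRestrict {P E : Finset (α × Fin n)} (hEP : E ⊆ P)
    (hE : IsMatching E) {S : Finset (Fin n)} (hS : S ⊆ E.image Prod.snd) :
    #S ≤ structRank (colRestrict P S) := by
  set E' := E.filter fun p => p.2 ∈ S
  have hE' : IsMatching E' := ⟨hE.1.mono (filter_subset _ _), hE.2.mono (filter_subset _ _)⟩
  have himage : E'.image Prod.snd = S := by
    refine Subset.antisymm (fun j hj => ?_) (fun j hj => ?_)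
    · obtain ⟨p, hp, rfl⟩ := mem_image.mp hj
      exact (mem_filter.mp hp).2
    · obtain ⟨p, hp, rfl⟩ := mem_image.mp (hS hj)
      exact mem_image_of_mem _ (mem_filter.mpr ⟨hp, hj⟩)
  calc #S = #E' := himage ▸ card_image_of_injOn hE'.2
    _ = (matchingMatrix E').rank := (rank_matchingMatrix hE').symm
    _ ≤ structRank (colRestrict P S) :=
        rank_le_structRank (respects_matchingMatrix (filter_subset_filter _ hEP))

end StructRank

section Dilation

variable {α : Type*} [Fintype α] {n : ℕ} {P : Finset (α × Fin n)}

theorem IsDilation.exists_isMinimalDilation_subset {S : Finset (Fin n)} (h : IsDilation P S) :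
    ∃ T ⊆ S, IsMinimalDilation P T := by
  induction S using Finset.strongInduction with
  | _ S ih =>
    by_cases hmin : ∃ T ⊂ S, IsDilation P T
    · obtain ⟨T, hTS, hT⟩ := hmin
      obtain ⟨U, hUT, hU⟩ := ih T hTS hT
      exact ⟨U, hUT.trans hTS.subset, hU⟩
    · exact ⟨S, Subset.refl S, h, fun T hTS hT => hmin ⟨T, hTS, hT⟩⟩

theorem IsDilation.nonempty {S : Finset (Fin n)} (h : IsDilation P S) : S.Nonempty :=
  card_pos.mp (Nat.zero_lt_of_lt h)

theorem not_isDilation_of_disjoint_isMinimalDilation {S : Finset (Fin n)}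
    (h : ∀ T, IsMinimalDilation P T → Disjoint S T) : ¬ IsDilation P S := fun hS => by
  obtain ⟨T, hTS, hT⟩ := hS.exists_isMinimalDilation_subset
  obtain ⟨j, hj⟩ := hT.1.nonempty
  exact disjoint_left.mp (h T hT) (hTS hj) hj

end Dilation

theorem generic_rank_preserved_when_targets_avoid_dilations {n q r : ℕ}
    (P : Finset ((Fin n ⊕ Fin q) × Fin n))  -- zero pattern of the stacked matrix [A; C]
    (F : Matrix (Fin r) (Fin n) ℝ) :
    -- `D` is the union of all minimal dilation sets
    let D : Finset (Fin n) :=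
      Finset.univ.filter (fun j => ∃ S : Finset (Fin n), IsMinimalDilation P S ∧ j ∈ S)
    -- the columns avoiding `D` have full structural rank
    structRank (colRestrict P (Finset.univ \ D)) = (Finset.univ \ D).card ∧
    -- if every row of `F` has exactly one nonzero entry, in a column avoiding `D`,
    -- then generically `rank [A; C; F] = rank [A; C]`
    ((∀ l : Fin r, ∃ j : Fin n, j ∉ D ∧ F l j ≠ 0 ∧ ∀ j' : Fin n, j' ≠ j → F l j' = 0) →
      ∃ M : Matrix (Fin n ⊕ Fin q) (Fin n) ℝ,
        Respects P M ∧ M.rank = structRank P ∧ (fromRows M F).rank = M.rank) := by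
  intro D
  have hX : ∀ S ⊆ univ \ D, #S ≤ #(neighbors P S) := fun S hS => by
    refine not_lt.mp <| isDilation_iff.not.mp <| not_isDilation_of_disjoint_isMinimalDilation ?_
    exact fun T hT => disjoint_left.mpr fun j hjS hjT =>
      (mem_sdiff.mp (hS hjS)).2 (by simpa [D] using ⟨T, hT, hjT⟩)
  obtain ⟨E, hEP, hE, hXE, hcard⟩ := exists_matching_of_card_le_card_neighbors
    (d := n - structRank P) hX fun S => by have := card_add_structRank_le P S; omega
  have hEcard : #E = structRank P := by
    refine le_antisymm ?_ (by have := structRank_le P; omega)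
    exact rank_matchingMatrix hE ▸ rank_le_structRank (respects_matchingMatrix hEP)
  refine ⟨(structRank_colRestrict_le P _).antisymm (card_le_structRank_colRestrict hEP hE hXE),
    fun hF => ⟨matchingMatrix E, respects_matchingMatrix hEP,
      by rw [rank_matchingMatrix hE, hEcard], rank_fromRows_of_mem_span _ _ fun l => ?_⟩⟩
  obtain ⟨j, hjD, -, hF0⟩ := hF l
  have hFl : F l = F l j • Pi.single j 1 := by
    ext j'
    by_cases h : j' = j
    · simp [h]
    · simp [h, hF0 j' h]
  rw [hFl]
  exact smul_mem _ _ <|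
    single_mem_span_matchingMatrix hE (hXE (mem_sdiff.mpr ⟨mem_univ j, hjD⟩))
end
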